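/- arXiv:2402.11466 — 2 statements merged into one kernel-verified Lean document; each statement's English description precedes it below -/
import Mathlib

section
/- Let (Ω, F, P) be a probability space, let Y be an integrable random variable, let A be a Bernoulli random variable, let H be a sub-σ-algebra such that A and Y are conditionally independent given H, and let π = P(A = 1 | H) with π > ε > 0 almost surely. Then E[ (1_{A=1}/π) · Y ] = E[Y]. -/
open MeasureTheory ProbabilityTheory

theorem ipw_identification {Ω : Type*} {H : MeasurableSpace Ω} {mΩ : MeasurableSpace Ω} [StandardBorelSpace Ω]
    {μ : Measure Ω} [IsProbabilityMeasure μ]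
    (hH : H ≤ mΩ)
    (Y : Ω → ℝ) (hY : Integrable Y μ)
    (A : Ω → Bool) (hA : Measurable A)
    (hindep : CondIndepFun H hH A Y μ)
    (π : Ω → ℝ) (hπ : π =ᵐ[μ] μ[(fun ω => if A ω then (1 : ℝ) else 0) | H])
    (ε : ℝ) (hε : 0 < ε) (hπε : ∀ᵐ ω ∂μ, ε < π ω)
    (hint : Integrable (fun ω => (if A ω then (1 : ℝ) else 0) / π ω * Y ω) μ) :
    ∫ ω, (if A ω then (1 : ℝ) else 0) / π ω * Y ω ∂μ = ∫ ω, Y ω ∂μ := by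
  classical
  -- measurable modification of Y
  set Y' : Ω → ℝ := hY.1.mk Y with hY'def
  have hY'sm : StronglyMeasurable[mΩ] Y' := hY.1.stronglyMeasurable_mk
  have hYY' : Y =ᵐ[μ] Y' := hY.1.ae_eq_mk
  have hY'meas : Measurable[mΩ] Y' := hY'sm.measurable
  have hA' : Measurable[mΩ] A := hA
  have hY'int : Integrable Y' μ := hY.congr hYY'
  set κ := condExpKernel (mΩ := mΩ) μ H with hκdef
  -- the indicator function of A
  have hind_meas : Measurable[mΩ] (fun ω => if A ω then (1 : ℝ) else 0) :=
    (measurable_from_top (f := fun b : Bool => if b then (1 : ℝ) else 0)).comp hA'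
  have hind_int : Integrable (fun ω => if A ω then (1 : ℝ) else 0) μ := by
    refine Integrable.mono (integrable_const (1 : ℝ)) hind_meas.aestronglyMeasurable
      (Filter.Eventually.of_forall fun ω => ?_)
    by_cases h : A ω <;> simp [h]
  set c : Ω → ℝ := μ[(fun ω => if A ω then (1 : ℝ) else 0) | H] with hcdef
  have hc_sm : StronglyMeasurable[H] c := stronglyMeasurable_condExp
  have hπc : π =ᵐ[μ] c := hπ
  have hcpos : ∀ᵐ ω ∂μ, ε < c ω := by
    filter_upwards [hπc, hπε] with ω h1 h2
    rw [← h1]; exact h2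
  -- Step A: transfer conditional independence to the measurable modification Y'
  set N : Set Ω := @toMeasurable Ω mΩ μ {ω | Y ω ≠ Y' ω} with hNdef
  have hNsub : {ω | Y ω ≠ Y' ω} ⊆ N := @subset_toMeasurable Ω mΩ μ _
  have hNmeas : MeasurableSet[mΩ] N := @measurableSet_toMeasurable Ω mΩ μ _
  have hNnull : μ N = 0 := by
    rw [hNdef, @measure_toMeasurable Ω mΩ μ _]
    exact ae_iff.1 hYY'
  have hκN : ∀ᵐ ω ∂(μ.trim hH), κ ω N = 0 := by
    have h1 : (fun ω => (κ ω N).toReal) =ᵐ[μ.trim hH] μ⟦N | H⟧ :=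
      condExpKernel_ae_eq_trim_condExp (mΩ := mΩ) hH hNmeas
    have h2 : μ⟦N | H⟧ =ᵐ[μ] (0 : Ω → ℝ) := by
      have hind0 : (N.indicator (fun _ => (1 : ℝ))) =ᵐ[μ] (0 : Ω → ℝ) := by
        filter_upwards [measure_eq_zero_iff_ae_notMem.mp hNnull] with ω hω
        simp [Set.indicator_of_notMem hω]
      calc μ⟦N | H⟧ =ᵐ[μ] μ[(0 : Ω → ℝ) | H] := condExp_congr_ae hind0
        _ = (0 : Ω → ℝ) := condExp_zero
    have h2' : μ⟦N | H⟧ =ᵐ[μ.trim hH] (0 : Ω → ℝ) :=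
      (StronglyMeasurable.ae_eq_trim_iff hH stronglyMeasurable_condExp stronglyMeasurable_const).mpr h2
    filter_upwards [h1, h2'] with ω ha hb
    have htr : (κ ω N).toReal = 0 := by rw [ha, hb]; rfl
    have hne : κ ω N ≠ ⊤ := measure_ne_top _ _
    exact ((ENNReal.toReal_eq_zero_iff _).mp htr).resolve_right hne
  have hindep' : CondIndepFun H hH A Y' μ := by
    refine Kernel.IndepFun.congr' hindep (Filter.Eventually.of_forall fun a => ?_) ?_
    · exact Filter.EventuallyEq.rfl
    · filter_upwards [hκN] with a ha
      exact ae_iff.mpr (measure_mono_null hNsub ha)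
  -- Step B: a.e. pointwise independence under the conditional kernel
  have h_all : ∀ (t : Set Bool) (q : ℚ), ∀ᵐ ω ∂(μ.trim hH),
      κ ω (A ⁻¹' t ∩ Y' ⁻¹' (Set.Iic (q : ℝ)))
        = κ ω (A ⁻¹' t) * κ ω (Y' ⁻¹' (Set.Iic (q : ℝ))) := by
    intro t q
    exact hindep' (A ⁻¹' t) (Y' ⁻¹' (Set.Iic (q : ℝ)))
      ⟨t, MeasurableSpace.measurableSet_top, rfl⟩ ⟨Set.Iic (q : ℝ), measurableSet_Iic, rfl⟩
  have h_ae : ∀ᵐ ω ∂(μ.trim hH), ∀ (t : Set Bool) (q : ℚ),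
      κ ω (A ⁻¹' t ∩ Y' ⁻¹' (Set.Iic (q : ℝ)))
        = κ ω (A ⁻¹' t) * κ ω (Y' ⁻¹' (Set.Iic (q : ℝ))) := by
    rw [ae_all_iff]
    intro t
    rw [ae_all_iff]
    intro q
    exact h_all t q
  have h_ae_indep : ∀ᵐ ω ∂μ, IndepFun A Y' (κ ω) := by
    refine ae_of_ae_trim hH ?_
    filter_upwards [h_ae] with ω hω
    have hprob : IsProbabilityMeasure (κ ω) := inferInstance
    set p1 : Set (Set Ω) := {s | ∃ t : Set Bool, A ⁻¹' t = s} with hp1def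
    set p2 : Set (Set Ω) := {s | ∃ t ∈ (⋃ q : ℚ, {Set.Iic (q : ℝ)}), Y' ⁻¹' t = s} with hp2def
    have hp1 : IsPiSystem p1 := by
      rintro _ ⟨t1, rfl⟩ _ ⟨t2, rfl⟩ _
      exact ⟨t1 ∩ t2, rfl⟩
    clear hcpos hπc hπε hint
    have hp2 : IsPiSystem p2 := Real.isPiSystem_Iic_rat.comap Y'
    have hpm1 : MeasurableSpace.comap A Bool.instMeasurableSpace
        = MeasurableSpace.generateFrom p1 := by
      apply le_antisymm
      · rintro s ⟨t, -, rfl⟩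
        exact MeasurableSpace.measurableSet_generateFrom ⟨t, rfl⟩
      · refine MeasurableSpace.generateFrom_le ?_
        rintro s ⟨t, rfl⟩
        exact ⟨t, MeasurableSpace.measurableSet_top, rfl⟩
    have hpm2 : MeasurableSpace.comap Y' Real.measurableSpace = MeasurableSpace.generateFrom p2 := by
      have hreal : Real.measurableSpace
          = MeasurableSpace.generateFrom (⋃ q : ℚ, {Set.Iic (q : ℝ)}) :=
        (BorelSpace.measurable_eq (α := ℝ)).trans Real.borel_eq_generateFrom_Iic_rat
      rw [hreal, MeasurableSpace.comap_generateFrom]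
      rfl
    have hyp : IndepSets p1 p2 (κ ω) := by
      rintro s1 s2 ⟨t, rfl⟩ ⟨u, hu, rfl⟩
      obtain ⟨q, hq⟩ := Set.mem_iUnion.mp hu
      rw [Set.mem_singleton_iff] at hq
      subst hq
      exact Filter.Eventually.of_forall fun _ => hω t q
    exact IndepSets.indep hA.comap_le hY'meas.comap_le hp1 hp2 hpm1 hpm2 hyp
  -- Step C: condexp product formula
  have h_f0_int : Integrable (fun ω => (if A ω then (1 : ℝ) else 0) * Y' ω) μ := by
    refine Integrable.mono hY'int (hind_meas.mul hY'meas).aestronglyMeasurable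
      (Filter.Eventually.of_forall fun ω => ?_)
    by_cases h : A ω <;> simp [h]
  have hprod : μ[(fun ω => (if A ω then (1 : ℝ) else 0) * Y' ω) | H]
      =ᵐ[μ] fun ω => c ω * (μ[Y' | H]) ω := by
    have e1 := condExp_ae_eq_integral_condExpKernel (mΩ := mΩ) hH h_f0_int
    have e2 := condExp_ae_eq_integral_condExpKernel (mΩ := mΩ) hH hind_int
    have e3 := condExp_ae_eq_integral_condExpKernel (mΩ := mΩ) hH hY'int
    filter_upwards [e1, e2, e3, h_ae_indep] with ω he1 he2 he3 hω
    have hIF : IndepFun (fun ω' => if A ω' then (1 : ℝ) else 0) Y' (κ ω) := by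
      have := hω.comp (φ := fun b : Bool => if b then (1 : ℝ) else 0) (ψ := id)
        measurable_from_top measurable_id
      exact this
    have hmul := hIF.integral_fun_mul_eq_mul_integral (μ := κ ω)
      hind_meas.aestronglyMeasurable hY'meas.aestronglyMeasurable
    rw [hcdef, he1, he2, he3]
    exact hmul
  -- assemble
  have hne : ∀ᵐ ω ∂μ, c ω ≠ 0 := by
    filter_upwards [hcpos] with ω h
    exact ne_of_gt (lt_trans hε h)
  have h_eq1 : (fun ω => (if A ω then (1 : ℝ) else 0) / π ω * Y ω)
      =ᵐ[μ] fun ω => (c ω)⁻¹ * ((if A ω then (1 : ℝ) else 0) * Y' ω) := by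
    filter_upwards [hπc, hYY'] with ω h1 h2
    rw [h1, h2, div_eq_inv_mul, mul_assoc]
  have h_int2 : Integrable (fun ω => (c ω)⁻¹ * ((if A ω then (1 : ℝ) else 0) * Y' ω)) μ :=
    hint.congr h_eq1
  have h_pull : μ[(fun ω => (c ω)⁻¹ * ((if A ω then (1 : ℝ) else 0) * Y' ω)) | H]
      =ᵐ[μ] fun ω => (c ω)⁻¹ * (μ[(fun ω => (if A ω then (1 : ℝ) else 0) * Y' ω) | H]) ω :=
    condExp_mul_of_stronglyMeasurable_left (hc_sm.measurable.inv.stronglyMeasurable) h_int2 h_f0_int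
  have h_ae2 : (fun ω => (c ω)⁻¹ * (μ[(fun ω => (if A ω then (1 : ℝ) else 0) * Y' ω) | H]) ω)
      =ᵐ[μ] μ[Y' | H] := by
    filter_upwards [hprod, hne] with ω h1 h2
    rw [h1, ← mul_assoc, inv_mul_cancel₀ h2, one_mul]
  calc ∫ ω, (if A ω then (1 : ℝ) else 0) / π ω * Y ω ∂μ
      = ∫ ω, (c ω)⁻¹ * ((if A ω then (1 : ℝ) else 0) * Y' ω) ∂μ := integral_congr_ae h_eq1
    _ = ∫ ω, (μ[(fun ω => (c ω)⁻¹ * ((if A ω then (1 : ℝ) else 0) * Y' ω)) | H]) ω ∂μ :=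
        (integral_condExp hH).symm
    _ = ∫ ω, (μ[Y' | H]) ω ∂μ := integral_congr_ae (h_pull.trans h_ae2)
    _ = ∫ ω, Y' ω ∂μ := integral_condExp hH
    _ = ∫ ω, Y ω ∂μ := integral_congr_ae hYY'.symm
end

section
/- Let π_0, π_n, μ_0, μ_n be measurable functions with ε ≤ π_0, π_n ≤ 1, and let A ∈ {0,1} with P(A=1|H) = π_0(H). Then E[ (1_{A=1}/π_n(H)) μ_0(H) − (1_{A=1}/π_0(H)) μ_0(H) + ((1_{A=1} − π_n(H))/π_n(H))(μ_n(H) − μ_0(H)) ... ] i.e. E[ 1_{A=1} μ_0/π_n − μ_0 − (1_{A=1} − π_n) μ_n / π_n ] = E[ (π_0 − π_n)(μ_0 − μ_n)/π_n ]. -/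
open MeasureTheory ProbabilityTheory

theorem double_robustness_identity {Ω : Type*} {H : MeasurableSpace Ω} {mΩ : MeasurableSpace Ω}
    {μ : Measure Ω} [IsProbabilityMeasure μ]
    (hH : H ≤ mΩ)
    (A : Ω → Bool) (hA : Measurable A)
    (π₀ πn μ₀ μn : Ω → ℝ)
    (hπ₀m : Measurable[H] π₀) (hπnm : Measurable[H] πn)
    (hμ₀m : Measurable[H] μ₀) (hμnm : Measurable[H] μn)
    (ε : ℝ) (hε : 0 < ε)
    (hπ₀b : ∀ᵐ ω ∂μ, ε ≤ π₀ ω ∧ π₀ ω ≤ 1)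
    (hπnb : ∀ᵐ ω ∂μ, ε ≤ πn ω ∧ πn ω ≤ 1)
    (hμ₀int : Integrable μ₀ μ) (hμnint : Integrable μn μ)
    (hπ₀ : π₀ =ᵐ[μ] μ[(fun ω => if A ω then (1 : ℝ) else 0) | H])
    (hint₁ : Integrable (fun ω =>
      (if A ω then (1 : ℝ) else 0) * μ₀ ω / πn ω - μ₀ ω
        - ((if A ω then (1 : ℝ) else 0) - πn ω) * μn ω / πn ω) μ)
    (hint₂ : Integrable (fun ω => (π₀ ω - πn ω) * (μ₀ ω - μn ω) / πn ω) μ) :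
    ∫ ω, ((if A ω then (1 : ℝ) else 0) * μ₀ ω / πn ω - μ₀ ω
        - ((if A ω then (1 : ℝ) else 0) - πn ω) * μn ω / πn ω) ∂μ
      = ∫ ω, (π₀ ω - πn ω) * (μ₀ ω - μn ω) / πn ω ∂μ := by
  set I : Ω → ℝ := fun ω => if A ω then (1 : ℝ) else 0 with hI
  set g : Ω → ℝ := fun ω => (μ₀ ω - μn ω) / πn ω with hg
  -- measurability facts
  have hgmH : Measurable[H] g := (hμ₀m.sub hμnm).div hπnm
  have hgSM : StronglyMeasurable[H] g := hgmH.stronglyMeasurable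
  have hgm : Measurable[mΩ] g := hgmH.mono hH le_rfl
  have hset : MeasurableSet[mΩ] {ω | A ω = true} := hA (measurableSet_singleton true)
  have hIm : Measurable[mΩ] I := Measurable.ite hset measurable_const measurable_const
  have hπ₀mm : Measurable[mΩ] π₀ := hπ₀m.mono hH le_rfl
  have hπnmm : Measurable[mΩ] πn := hπnm.mono hH le_rfl
  -- integrability facts
  have hIbdd : ∀ ω, ‖I ω‖ ≤ 1 := by
    intro ω; simp only [hI]; split <;> simp
  have hIint : Integrable I μ := (integrable_const (1:ℝ)).mono' hIm.aestronglyMeasurable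
    (Filter.Eventually.of_forall hIbdd)
  have hgint : Integrable g μ := by
    have : Integrable (fun ω => (πn ω)⁻¹ * (μ₀ ω - μn ω)) μ := by
      apply (hμ₀int.sub hμnint).bdd_mul (c := ε⁻¹)
        (hπnmm.inv.aestronglyMeasurable)
      filter_upwards [hπnb] with ω ⟨h1, h2⟩
      rw [Real.norm_eq_abs, Pi.inv_apply, abs_inv, abs_of_pos (lt_of_lt_of_le hε h1)]
      exact inv_anti₀ hε h1
    exact this.congr (by filter_upwards with ω; simp [hg, div_eq_inv_mul])
  have hgIint : Integrable (fun ω => g ω * I ω) μ := by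
    have : Integrable (fun ω => I ω * g ω) μ :=
      hgint.bdd_mul (c := 1) hIm.aestronglyMeasurable (Filter.Eventually.of_forall hIbdd)
    exact this.congr (by filter_upwards with ω; ring)
  have hgπ₀int : Integrable (fun ω => g ω * π₀ ω) μ := by
    have : Integrable (fun ω => π₀ ω * g ω) μ := by
      apply hgint.bdd_mul (c := 1) hπ₀mm.aestronglyMeasurable
      filter_upwards [hπ₀b] with ω ⟨h1, h2⟩
      rw [Real.norm_eq_abs, abs_of_pos (lt_of_lt_of_le hε h1)]; exact h2
    exact this.congr (by filter_upwards with ω; ring)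
  -- key conditioning step : ∫ g * I = ∫ g * π₀
  have hkey : ∫ ω, g ω * I ω ∂μ = ∫ ω, g ω * π₀ ω ∂μ := by
    have hcond : μ[(fun ω => g ω * I ω)|H] =ᵐ[μ] fun ω => g ω * (μ[I|H]) ω := by
      exact condExp_mul_of_stronglyMeasurable_left hgSM hgIint hIint
    calc ∫ ω, g ω * I ω ∂μ = ∫ ω, (μ[(fun ω => g ω * I ω)|H]) ω ∂μ :=
          (integral_condExp hH).symm
      _ = ∫ ω, g ω * (μ[I|H]) ω ∂μ := integral_congr_ae hcond
      _ = ∫ ω, g ω * π₀ ω ∂μ := by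
          apply integral_congr_ae
          filter_upwards [hπ₀] with ω hω
          rw [← hω]
  -- pointwise identity a.e.
  have hae1 : (fun ω => I ω * μ₀ ω / πn ω - μ₀ ω - (I ω - πn ω) * μn ω / πn ω)
      =ᵐ[μ] fun ω => g ω * I ω + (μn ω - μ₀ ω) := by
    filter_upwards [hπnb] with ω ⟨h1, _⟩
    have hne : πn ω ≠ 0 := (lt_of_lt_of_le hε h1).ne'
    simp only [hg]; field_simp
    ring
  have hae2 : (fun ω => (π₀ ω - πn ω) * (μ₀ ω - μn ω) / πn ω)
      =ᵐ[μ] fun ω => g ω * π₀ ω + (μn ω - μ₀ ω) := by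
    filter_upwards [hπnb] with ω ⟨h1, _⟩
    have hne : πn ω ≠ 0 := (lt_of_lt_of_le hε h1).ne'
    simp only [hg]; field_simp
    ring
  have hsub : Integrable (fun ω => μn ω - μ₀ ω) μ := hμnint.sub hμ₀int
  rw [integral_congr_ae hae1, integral_congr_ae hae2,
    integral_add hgIint hsub, integral_add hgπ₀int hsub, hkey]
end
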